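/- In the Poincaré half-space model of ℍⁿ with distance d(x,y) = 2 arcsinh(‖x − y‖_e / (2√(x_n y_n))), for the vertical geodesic line r(x̂₀) = {(x̂, x_n) : x̂ = x̂₀, x_n > 0} and any t > 0, the closed t-neighborhood of r(x̂₀) is the cone {(x̂, x_n) ∈ ℍⁿ : ‖x̂ − x̂₀‖_e ≤ sinh(t) · x_n}. -/

import Mathlib

open Set

/-- The hyperbolic distance in the Poincaré half-space model, where a point is
a pair `(x̂, x_n) ∈ ℝ^{m} × ℝ` (the model being `ℍ^{m+1}`, so `m = n - 1`):
`d(x,y) = 2 arcsinh(‖x - y‖_e / (2√(x_n y_n)))`. -/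
noncomputable def hdist {m : ℕ} (x y : EuclideanSpace ℝ (Fin m) × ℝ) : ℝ :=
  2 * Real.arsinh
    (Real.sqrt (‖x.1 - y.1‖ ^ 2 + (x.2 - y.2) ^ 2) / (2 * Real.sqrt (x.2 * y.2)))

/-!
Write `a = ‖x̂ - x̂₀‖` and `h = x_n`. Since `sinh (2 arsinh u) = 2u√(1 + u²)`, the distance
from `x` to the point `(x̂₀, s)` satisfies
`sinh d = √((a² + (h - s)²)(a² + (h + s)²)) / (2hs) = √((2as)² + (a² + h² - s²)²) / (2hs)`,
which is at least `a / h`, with equality at `s = √(a² + h²)`, where the Euclidean sphere about `(x̂₀, 0)` through `x`,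
a geodesic orthogonal to the line, meets it. So the distance from `x` to the line is
`arsinh (a / h)`, and it is at most `t` iff `a ≤ sinh t · h`.
-/

namespace HalfSpace

variable {m : ℕ}

lemma sinh_hdist {x y : EuclideanSpace ℝ (Fin m) × ℝ} (hx : 0 < x.2) (hy : 0 < y.2) :
    Real.sinh (hdist x y) =
      Real.sqrt ((‖x.1 - y.1‖ ^ 2 + (x.2 - y.2) ^ 2) * (‖x.1 - y.1‖ ^ 2 + (x.2 + y.2) ^ 2)) /
        (2 * (x.2 * y.2)) := by
  rw [hdist]
  set a := ‖x.1 - y.1‖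
  set h := x.2
  set s := y.2
  have hhs : 0 < h * s := mul_pos hx hy
  have hA : 0 ≤ a ^ 2 + (h - s) ^ 2 := by positivity
  have hB : 0 ≤ a ^ 2 + (h + s) ^ 2 := by positivity
  have hsq : Real.sqrt (h * s) ^ 2 = h * s := Real.sq_sqrt hhs.le
  have hcosh : 1 + (Real.sqrt (a ^ 2 + (h - s) ^ 2) / (2 * Real.sqrt (h * s))) ^ 2 =
      (Real.sqrt (a ^ 2 + (h + s) ^ 2) / (2 * Real.sqrt (h * s))) ^ 2 := by
    rw [div_pow, div_pow, Real.sq_sqrt hA, Real.sq_sqrt hB, mul_pow, hsq]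
    field_simp
    ring
  rw [Real.sinh_two_mul, Real.sinh_arsinh, Real.cosh_arsinh, hcosh,
    Real.sqrt_sq (by positivity), Real.sqrt_mul hA]
  field_simp
  rw [hsq, mul_comm]

lemma sum_sq_mul_sum_sq_eq (a h s : ℝ) :
    (a ^ 2 + (h - s) ^ 2) * (a ^ 2 + (h + s) ^ 2) =
      (2 * a * s) ^ 2 + (a ^ 2 + h ^ 2 - s ^ 2) ^ 2 := by
  ring

lemma norm_sub_div_le_sinh_hdist (x : EuclideanSpace ℝ (Fin m) × ℝ)
    (x₀ : EuclideanSpace ℝ (Fin m))     {s : ℝ} (hx : 0 < x.2) (hs : 0 < s) :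
    ‖x.1 - x₀‖ / x.2 ≤ Real.sinh (hdist x (x₀, s)) := by
  rw [sinh_hdist hx hs, div_le_div_iff₀ hx (by positivity)]
  set a := ‖x.1 - x₀‖
  have hprod : 2 * a * s ≤
      Real.sqrt ((a ^ 2 + (x.2 - s) ^ 2) * (a ^ 2 + (x.2 + s) ^ 2)) := by
    rw [sum_sq_mul_sum_sq_eq]
    exact Real.le_sqrt_of_sq_le (le_add_of_nonneg_right (sq_nonneg _))
  calc a * (2 * (x.2 * s)) = 2 * a * s * x.2 := by ring
    _ ≤ _ := mul_le_mul_of_nonneg_right hprod hx.le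

lemma sinh_hdist_foot (x : EuclideanSpace ℝ (Fin m) × ℝ)
    (x₀ : EuclideanSpace ℝ (Fin m))     (hx : 0 < x.2) :
    Real.sinh (hdist x (x₀, Real.sqrt (‖x.1 - x₀‖ ^ 2 + x.2 ^ 2))) = ‖x.1 - x₀‖ / x.2 := by
  have hs : 0 < Real.sqrt (‖x.1 - x₀‖ ^ 2 + x.2 ^ 2) := Real.sqrt_pos.2 (by positivity)
  rw [sinh_hdist hx hs]
  set a := ‖x.1 - x₀‖
  set s := Real.sqrt (a ^ 2 + x.2 ^ 2)
  have hs2 : s ^ 2 = a ^ 2 + x.2 ^ 2 := Real.sq_sqrt (by positivity)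
  have hprod : (a ^ 2 + (x.2 - s) ^ 2) * (a ^ 2 + (x.2 + s) ^ 2) = (2 * a * s) ^ 2 := by
    rw [sum_sq_mul_sum_sq_eq, hs2, sub_self, sq (0 : ℝ), mul_zero, add_zero]
  rw [hprod, Real.sqrt_sq (by positivity)]
  field_simp

lemma isLeast_hdist_vertical (x : EuclideanSpace ℝ (Fin m) × ℝ)
    (x₀ : EuclideanSpace ℝ (Fin m))     (hx : 0 < x.2) :
    IsLeast {d : ℝ | ∃ s : ℝ, 0 < s ∧ d = hdist x (x₀, s)}
      (Real.arsinh (‖x.1 - x₀‖ / x.2)) := by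
  refine ⟨⟨Real.sqrt (‖x.1 - x₀‖ ^ 2 + x.2 ^ 2), Real.sqrt_pos.2 (by positivity), ?_⟩, ?_⟩
  · rw [← sinh_hdist_foot x x₀ hx, Real.arsinh_sinh]
  · rintro d ⟨s, hs, rfl⟩
    rw [← Real.arsinh_sinh (hdist x (x₀, s)), Real.arsinh_le_arsinh]
    exact norm_sub_div_le_sinh_hdist x x₀ hx hs

end HalfSpace

open HalfSpace in
theorem stmt_12_general (m : ℕ) (x₀ : EuclideanSpace ℝ (Fin m)) (t : ℝ) :
    {x : EuclideanSpace ℝ (Fin m) × ℝ | 0 < x.2 ∧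
        sInf {d : ℝ | ∃ s : ℝ, 0 < s ∧ d = hdist x (x₀, s)} ≤ t} =
      {x : EuclideanSpace ℝ (Fin m) × ℝ | 0 < x.2 ∧
        ‖x.1 - x₀‖ ≤ Real.sinh t * x.2} := by
  ext x
  simp only [mem_ofPred_eq, and_congr_right_iff]
  intro hx
  rw [(isLeast_hdist_vertical x x₀ hx).csInf_eq, ← Real.arsinh_sinh t, Real.arsinh_le_arsinh,
    Real.sinh_arsinh, div_le_iff₀ hx]

/-- The closed `t`-neighborhood of the vertical geodesic line `r(x̂₀)` in the
half-space model is the cone `{‖x̂ - x̂₀‖ ≤ sinh(t) · x_n}`. -/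
theorem stmt_12 (m : ℕ) (x₀ : EuclideanSpace ℝ (Fin m)) (t : ℝ) (ht : 0 < t) :
    {x : EuclideanSpace ℝ (Fin m) × ℝ | 0 < x.2 ∧
        sInf {d : ℝ | ∃ s : ℝ, 0 < s ∧ d = hdist x (x₀, s)} ≤ t} =
      {x : EuclideanSpace ℝ (Fin m) × ℝ | 0 < x.2 ∧
        ‖x.1 - x₀‖ ≤ Real.sinh t * x.2} :=
  stmt_12_general m x₀ t
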